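/- Let B ∈ ℝ^{N×N} with singular values σ₁ ≥ σ₂ ≥ … ≥ σ_N ≥ 0 (the square roots of the eigenvalues of BᵀB listed in descending order with multiplicity), and let 0 ≤ k ≤ N. Then there exists a matrix B* ∈ ℝ^{N×N} with rank(B*) ≤ k such that ‖B − B*‖_F² = σ_{k+1}² + σ_{k+2}² + … + σ_N²; consequently the minimum of ‖B − X‖_F over matrices X of rank at most k equals sqrt(σ_{k+1}² + … + σ_N²) and is attained by the rank-k truncated singular value decomposition of B. -/

import Mathlib

open Matrix BigOperators

noncomputable def frobNorm {p q : ℕ} (M : Matrix (Fin p) (Fin q) ℝ) : ℝ :=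
  Real.sqrt (M * Mᵀ).trace

/-!
Diagonalise `Bᵀ B = W diag(σ²) Wᵀ` with `W` orthogonal. Keeping only the first `k` directions
of `W`, i.e. replacing `B` by `B W D Wᵀ` with `D` the diagonal projection onto the first `k`
coordinates, leaves a residual of squared Frobenius norm `∑_{i ≥ k} σ_i²`.

Conversely, let `rank X ≤ k` and let `P` be the orthogonal projection onto the row space of `X`.
Then `(B - X)(1 - P) = B(1 - P)`, so `‖B - X‖² ≥ tr (Bᵀ B (1 - P)) = ∑ σ_i² (1 - t_i)` with
`t_i = (Wᵀ P W)_ii ∈ [0, 1]` and `∑ t_i = tr P = rank X ≤ k`. Among such weights, `∑ σ_i² t_i`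
is largest when the weight sits on the `k` largest `σ_i²`.
-/

open Finset

section RealMatrix

variable {m n : Type*} [Fintype m] [Fintype n]

theorem trace_mul_transpose_nonneg (M : Matrix m n ℝ) : 0 ≤ (M * Mᵀ).trace := by
  simpa [conjTranspose_eq_transpose_of_trivial] using
    (posSemidef_self_mul_conjTranspose M).trace_nonneg

theorem IsStarProjection.transpose_eq {P : Matrix n n ℝ} (hP : IsStarProjection P) : Pᵀ = P := by
  simpa [star_eq_conjTranspose, conjTranspose_eq_transpose_of_trivial] using
    hP.isSelfAdjoint.star_eq

theorem IsStarProjection.mul_mul_transpose [DecidableEq n] {P : Matrix n n ℝ}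
    (hP : IsStarProjection P) {A : Matrix m n ℝ} (hA : Aᵀ * A = 1) :
    IsStarProjection (A * P * Aᵀ) := by
  rw [isStarProjection_iff']
  constructor
  · calc A * P * Aᵀ * (A * P * Aᵀ) = A * (P * (Aᵀ * A) * P) * Aᵀ := by
          simp only [Matrix.mul_assoc]
      _ = A * P * Aᵀ := by rw [hA, Matrix.mul_one, hP.isIdempotentElem.eq, Matrix.mul_assoc]
  · rw [star_eq_conjTranspose, conjTranspose_eq_transpose_of_trivial, transpose_mul,
      transpose_mul, transpose_transpose, hP.transpose_eq, Matrix.mul_assoc]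

open scoped MatrixOrder in
theorem IsStarProjection.diag_mem_Icc [DecidableEq n] {P : Matrix n n ℝ}
    (hP : IsStarProjection P) (i : n) : P i i ∈ Set.Icc 0 1 := by
  have h₀ := (nonneg_iff_posSemidef.mp hP.nonneg).diag_nonneg (i := i)
  have h₁ := (nonneg_iff_posSemidef.mp hP.one_sub_nonneg).diag_nonneg (i := i)
  simp only [Matrix.sub_apply, one_apply_eq, sub_nonneg] at h₁
  exact ⟨h₀, h₁⟩

theorem trace_mul_mul_transpose_of_isStarProjection {P : Matrix n n ℝ} (hP : IsStarProjection P)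
    (M : Matrix m n ℝ) : (M * P * (M * P)ᵀ).trace = (Mᵀ * M * P).trace := by
  rw [transpose_mul, hP.transpose_eq, Matrix.mul_assoc, ← Matrix.mul_assoc P,
    hP.isIdempotentElem.eq, trace_mul_comm, Matrix.mul_assoc, trace_mul_comm]

theorem trace_mul_mul_transpose_le_of_isStarProjection [DecidableEq n] {P : Matrix n n ℝ}
    (hP : IsStarProjection P) (M : Matrix m n ℝ) :
    (M * P * (M * P)ᵀ).trace ≤ (M * Mᵀ).trace := by
  have hcompl := trace_mul_transpose_nonneg (M * (1 - P))
  rw [trace_mul_mul_transpose_of_isStarProjection hP.one_sub, Matrix.mul_sub, Matrix.mul_one,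
    trace_sub, trace_mul_comm Mᵀ] at hcompl
  rw [trace_mul_mul_transpose_of_isStarProjection hP]
  linarith

theorem trace_mul_diagonal_mul_transpose_mul [DecidableEq n] (W : Matrix m n ℝ) (μ : n → ℝ)
    (Q : Matrix m m ℝ) : (W * diagonal μ * Wᵀ * Q).trace = ∑ i, μ i * (Wᵀ * Q * W) i i := by
  calc (W * diagonal μ * Wᵀ * Q).trace = (W * (diagonal μ * (Wᵀ * Q))).trace := by
        simp only [Matrix.mul_assoc]
    _ = (diagonal μ * (Wᵀ * Q * W)).trace := by
        rw [trace_mul_comm]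
        simp only [Matrix.mul_assoc]
    _ = ∑ i, μ i * (Wᵀ * Q * W) i i := by
        simp only [trace, diag_apply, diagonal_mul]

theorem Matrix.IsHermitian.exists_mem_orthogonalGroup_eq_mul_diagonal_mul_transpose
    [DecidableEq n] {A : Matrix n n ℝ} (hA : A.IsHermitian) (e : n ≃ n) :
    ∃ W ∈ orthogonalGroup n ℝ, A = W * diagonal (hA.eigenvalues ∘ e) * Wᵀ := by
  set U : Matrix n n ℝ := (hA.eigenvectorUnitary : Matrix n n ℝ)
  have hU : U * Uᵀ = 1 := by
    simpa [star_eq_conjTranspose, conjTranspose_eq_transpose_of_trivial] using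
      mem_unitaryGroup_iff.mp hA.eigenvectorUnitary.2
  have hspec : A = U * diagonal hA.eigenvalues * Uᵀ := by
    simpa [star_eq_conjTranspose, conjTranspose_eq_transpose_of_trivial] using
      hA.spectral_theorem
  refine ⟨U.submatrix id e, ?_, ?_⟩
  · rw [mem_orthogonalGroup_iff, transpose_submatrix, submatrix_mul_equiv, hU, submatrix_id_id]
  · rw [← submatrix_diagonal_equiv, transpose_submatrix, submatrix_mul_equiv,
      submatrix_mul_equiv, submatrix_id_id, ← hspec]

theorem exists_isStarProjection_mul_eq_self_trace_eq_rank [DecidableEq n] (X : Matrix m n ℝ) :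
    ∃ P : Matrix n n ℝ, IsStarProjection P ∧ X * P = X ∧ P.trace = X.rank := by
  classical
  set S := LinearMap.range (toEuclideanLin Xᵀ)
  set P := (toEuclideanCLM (𝕜 := ℝ) (n := n)).symm S.starProjection
  have hP : IsStarProjection P := by
    set_option synthInstance.maxHeartbeats 200000 in
    exact isStarProjection_starProjection.map _
  have hlin : toEuclideanLin P = (S.starProjection : EuclideanSpace ℝ n →ₗ[ℝ] _) := by
    rw [← coe_toEuclideanCLM_eq_toEuclideanLin, StarAlgEquiv.apply_symm_apply]
  refine ⟨P, hP, ?_, ?_⟩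
  · have hPX : P * Xᵀ = Xᵀ := toEuclideanLin.injective <| by
      rw [toLpLin_mul_same, hlin]
      ext1 v
      exact S.starProjection_eq_self_iff.mpr ⟨v, rfl⟩
    rw [← transpose_transpose (X * P), transpose_mul, hP.transpose_eq, hPX, transpose_transpose]
  · have hproj : LinearMap.IsProj S (S.starProjection : EuclideanSpace ℝ n →ₗ[ℝ] _) :=
      ⟨fun x => by simp, fun x hx => S.starProjection_eq_self_iff.mpr hx⟩
    rw [← rank_transpose,
      rank_eq_finrank_range_toLin Xᵀ (PiLp.basisFun 2 ℝ n) (PiLp.basisFun 2 ℝ m),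
      ← toLpLin_eq_toLin, ← hproj.trace, ← hlin]
    exact (trace_toLin_eq P (PiLp.basisFun 2 ℝ n)).symm

theorem exists_rank_le_trace_sub_mul_transpose_eq [DecidableEq n] {B : Matrix m n ℝ}
    {W : Matrix n n ℝ} (hW : W ∈ orthogonalGroup n ℝ) {μ : n → ℝ}
    (hB : Bᵀ * B = W * diagonal μ * Wᵀ) (s : Finset n) :
    ∃ X : Matrix m n ℝ, X.rank ≤ #s ∧ ((B - X) * (B - X)ᵀ).trace = ∑ i ∈ sᶜ, μ i := by
  classical
  have hW₁ : Wᵀ * W = 1 := (mem_orthogonalGroup_iff' n ℝ).mp hW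
  set D : Matrix n n ℝ := diagonal fun i => if i ∈ s then 1 else 0
  have hD : IsStarProjection D := by
    rw [isStarProjection_iff', diagonal_mul_diagonal, star_eq_conjTranspose,
      diagonal_conjTranspose]
    exact ⟨congrArg diagonal (funext fun i => by split_ifs <;> simp), by simp [D]⟩
  have hP : IsStarProjection (W * D * Wᵀ) := hD.mul_mul_transpose hW₁
  refine ⟨B * (W * D * Wᵀ), ?_, ?_⟩
  · calc (B * (W * D * Wᵀ)).rank ≤ D.rank :=
          (rank_mul_le_right _ _).trans <| (rank_mul_le_left _ _).trans (rank_mul_le_right _ _)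
      _ = #s := by
          rw [rank_diagonal, Fintype.card_subtype]
          congr 1
          ext i
          simp
  · have hconj : Wᵀ * (1 - W * D * Wᵀ) * W = 1 - D := by
      rw [Matrix.mul_sub, Matrix.sub_mul, Matrix.mul_one, hW₁]
      simp only [← Matrix.mul_assoc, hW₁, Matrix.one_mul]
      rw [Matrix.mul_assoc, hW₁, Matrix.mul_one]
    have hres : B - B * (W * D * Wᵀ) = B * (1 - W * D * Wᵀ) := by
      rw [Matrix.mul_sub, Matrix.mul_one]
    rw [hres, trace_mul_mul_transpose_of_isStarProjection hP.one_sub, hB,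
      trace_mul_diagonal_mul_transpose_mul, hconj, ← sum_add_sum_compl s,
      sum_eq_zero fun i hi => by simp [D, hi], zero_add]
    exact sum_congr rfl fun i hi => by simp [D, mem_compl.mp hi]

end RealMatrix

theorem sum_mul_le_sum_of_threshold {ι : Type*} [Fintype ι] (s : Finset ι) {μ t : ι → ℝ}
    {c : ℝ} (hc : 0 ≤ c) (hs : ∀ i ∈ s, c ≤ μ i) (hsc : ∀ i ∉ s, μ i ≤ c)
    (ht0 : ∀ i, 0 ≤ t i) (ht1 : ∀ i, t i ≤ 1) (hts : ∑ i, t i ≤ #s) :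
    ∑ i, μ i * t i ≤ ∑ i ∈ s, μ i := by
  classical
  have hpoint : ∀ i,
      μ i * t i ≤ (if i ∈ s then μ i else 0) + c * (t i - if i ∈ s then 1 else 0) := by
    intro i
    by_cases hi : i ∈ s
    · simp only [hi, if_true]; nlinarith [hs i hi, ht1 i]
    · simp only [hi, if_false]; nlinarith [hsc i hi, ht0 i]
  calc ∑ i, μ i * t i
      ≤ ∑ i, ((if i ∈ s then μ i else 0) + c * (t i - if i ∈ s then 1 else 0)) :=
        sum_le_sum fun i _ => hpoint i
    _ = ∑ i ∈ s, μ i + c * (∑ i, t i - #s) := by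
        simp [sum_add_distrib, ← mul_sum, sum_sub_distrib, sum_ite_mem]
    _ ≤ ∑ i ∈ s, μ i := by nlinarith

theorem sum_mul_le_sum_filter_lt {N k : ℕ} {μ t : Fin N → ℝ} (hμ : Antitone μ)
    (hμ0 : ∀ i, 0 ≤ μ i) (ht0 : ∀ i, 0 ≤ t i) (ht1 : ∀ i, t i ≤ 1) (hts : ∑ i, t i ≤ k) :
    ∑ i, μ i * t i ≤ ∑ i ∈ univ.filter (fun i : Fin N => (i : ℕ) < k), μ i := by
  have hts' : ∑ i, t i ≤ #(univ.filter (fun i : Fin N => (i : ℕ) < k)) := by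
    have hN : ∑ i, t i ≤ N := by
      simpa using sum_le_card_nsmul univ t 1 fun i _ => ht1 i
    rw [Fin.card_filter_val_lt, Nat.cast_min]
    exact le_min hN hts
  by_cases hk : k < N
  · refine sum_mul_le_sum_of_threshold _ (hμ0 ⟨k, hk⟩) (fun i hi => hμ ?_) (fun i hi => hμ ?_)
      ht0 ht1 hts'
    · simp only [mem_filter, mem_univ, true_and] at hi
      exact Fin.le_def.mpr hi.le
    · simp only [mem_filter, mem_univ, true_and, not_lt] at hi
      exact Fin.le_def.mpr hi
  · refine sum_mul_le_sum_of_threshold _ le_rfl (fun i _ => hμ0 i) (fun i hi => ?_) ht0 ht1 hts'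
    simp only [mem_filter, mem_univ, true_and] at hi
    omega

theorem sum_filter_le_trace_of_rank_le {m : Type*} [Fintype m] {N k : ℕ}
    {B X : Matrix m (Fin N) ℝ} {W : Matrix (Fin N) (Fin N) ℝ} (hW : W ∈ orthogonalGroup (Fin N) ℝ)
    {μ : Fin N → ℝ} (hμ : Antitone μ) (hμ0 : ∀ i, 0 ≤ μ i) (hB : Bᵀ * B = W * diagonal μ * Wᵀ)
    (hX : X.rank ≤ k) :
    ∑ i ∈ univ.filter (fun i : Fin N => k ≤ (i : ℕ)), μ i ≤ ((B - X) * (B - X)ᵀ).trace := by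
  obtain ⟨P, hP, hXP, htrP⟩ := exists_isStarProjection_mul_eq_self_trace_eq_rank X
  have hWWt : W * Wᵀ = 1 := (mem_orthogonalGroup_iff _ ℝ).mp hW
  have hR : IsStarProjection (Wᵀ * P * W) := by
    simpa using hP.mul_mul_transpose (A := Wᵀ) (by rwa [transpose_transpose])
  have htrR : (Wᵀ * P * W).trace = P.trace := by
    rw [trace_mul_cycle, hWWt, Matrix.one_mul]
  have htop : ∑ i, μ i * (Wᵀ * P * W) i i ≤ ∑ i ∈ univ.filter (fun i : Fin N => (i : ℕ) < k), μ i :=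
    sum_mul_le_sum_filter_lt hμ hμ0 (fun i => (hR.diag_mem_Icc i).1)
      (fun i => (hR.diag_mem_Icc i).2) ((htrR.trans htrP).trans_le (by exact_mod_cast hX))
  have hsplit := sum_filter_add_sum_filter_not univ (fun i : Fin N => (i : ℕ) < k) μ
  simp only [not_lt] at hsplit
  have hconj : Wᵀ * (1 - P) * W = 1 - Wᵀ * P * W := by
    rw [Matrix.mul_sub, Matrix.sub_mul, Matrix.mul_one, (mem_orthogonalGroup_iff' _ ℝ).mp hW]
  have hres : (B - X) * (1 - P) = B * (1 - P) := by
    rw [Matrix.sub_mul, Matrix.mul_sub X, hXP, Matrix.mul_one, sub_self, sub_zero]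
  calc ∑ i ∈ univ.filter (fun i : Fin N => k ≤ (i : ℕ)), μ i
      ≤ ∑ i, μ i * (1 - Wᵀ * P * W) i i := by
        simp only [Matrix.sub_apply, one_apply_eq, mul_sub, mul_one, sum_sub_distrib]
        linarith
    _ = (B * (1 - P) * (B * (1 - P))ᵀ).trace := by
        rw [trace_mul_mul_transpose_of_isStarProjection hP.one_sub, hB,
          trace_mul_diagonal_mul_transpose_mul, hconj]
    _ ≤ ((B - X) * (B - X)ᵀ).trace := by
        rw [← hres]
        exact trace_mul_mul_transpose_le_of_isStarProjection hP.one_sub _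

theorem frobNorm_nonneg {p q : ℕ} (M : Matrix (Fin p) (Fin q) ℝ) : 0 ≤ frobNorm M :=
  Real.sqrt_nonneg _

theorem frobNorm_sq {p q : ℕ} (M : Matrix (Fin p) (Fin q) ℝ) :
    frobNorm M ^ 2 = (M * Mᵀ).trace :=
  Real.sq_sqrt (trace_mul_transpose_nonneg M)

theorem eckart_young_attainment_general
    (N k : ℕ)
    (B : Matrix (Fin N) (Fin N) ℝ)
    (hH : (Bᵀ * B).IsHermitian)
    (σ : Fin N → ℝ) (hanti : Antitone σ) (hnonneg : ∀ i, 0 ≤ σ i)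
    (hσ : ∃ e : Fin N ≃ Fin N, (fun i => σ i ^ 2) = hH.eigenvalues ∘ e) :
    (∃ Bstar : Matrix (Fin N) (Fin N) ℝ, Bstar.rank ≤ k ∧
        (frobNorm (B - Bstar)) ^ 2
          = ∑ i ∈ Finset.univ.filter (fun i : Fin N => k ≤ (i : ℕ)), σ i ^ 2) ∧
    IsLeast {t : ℝ | ∃ X : Matrix (Fin N) (Fin N) ℝ, X.rank ≤ k ∧ t = frobNorm (B - X)}
      (Real.sqrt (∑ i ∈ Finset.univ.filter (fun i : Fin N => k ≤ (i : ℕ)), σ i ^ 2)) := by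
  obtain ⟨e, he⟩ := hσ
  obtain ⟨W, hW, hBW⟩ := hH.exists_mem_orthogonalGroup_eq_mul_diagonal_mul_transpose e
  rw [← he] at hBW
  have hμ : Antitone fun i => σ i ^ 2 := fun i j hij => pow_le_pow_left₀ (hnonneg j) (hanti hij) 2
  obtain ⟨Bstar, hrank, hattain⟩ :=
    exists_rank_le_trace_sub_mul_transpose_eq hW hBW (univ.filter fun i : Fin N => (i : ℕ) < k)
  simp only [compl_filter, not_lt, ← frobNorm_sq] at hattain
  have hrank' : Bstar.rank ≤ k := hrank.trans (Fin.card_filter_val_lt.trans_le (min_le_right _ _))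
  refine ⟨⟨Bstar, hrank', hattain⟩, ⟨Bstar, hrank', ?_⟩, ?_⟩
  · rw [← hattain, Real.sqrt_sq (frobNorm_nonneg _)]
  · rintro _ ⟨X, hX, rfl⟩
    rw [Real.sqrt_le_left (frobNorm_nonneg _), frobNorm_sq]
    exact sum_filter_le_trace_of_rank_le hW hμ (fun i => sq_nonneg _) hBW hX

/-- **Eckart–Young attainment (Frobenius norm).** Let `B ∈ ℝ^{N×N}` with singular values
`σ₁ ≥ ⋯ ≥ σ_N ≥ 0` (square roots of the eigenvalues of `Bᵀ * B` in descending order with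
multiplicity) and `0 ≤ k ≤ N`. Then there exists `B*` with `rank B* ≤ k` such that
`‖B − B*‖_F² = σ_{k+1}² + ⋯ + σ_N²`; consequently the minimum of `‖B − X‖_F` over matrices
`X` of rank at most `k` equals `sqrt (σ_{k+1}² + ⋯ + σ_N²)` (attained by the rank-`k`
truncated SVD of `B`). -/
theorem eckart_young_attainment
    (N k : ℕ) (hkN : k ≤ N)
    (B : Matrix (Fin N) (Fin N) ℝ)
    (hH : (Bᵀ * B).IsHermitian)
    (σ : Fin N → ℝ) (hanti : Antitone σ) (hnonneg : ∀ i, 0 ≤ σ i)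
    (hσ : ∃ e : Fin N ≃ Fin N, (fun i => σ i ^ 2) = hH.eigenvalues ∘ e) :
    (∃ Bstar : Matrix (Fin N) (Fin N) ℝ, Bstar.rank ≤ k ∧
        (frobNorm (B - Bstar)) ^ 2
          = ∑ i ∈ Finset.univ.filter (fun i : Fin N => k ≤ (i : ℕ)), σ i ^ 2) ∧
    IsLeast {t : ℝ | ∃ X : Matrix (Fin N) (Fin N) ℝ, X.rank ≤ k ∧ t = frobNorm (B - X)}
      (Real.sqrt (∑ i ∈ Finset.univ.filter (fun i : Fin N => k ≤ (i : ℕ)), σ i ^ 2)) :=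
  eckart_young_attainment_general N k B hH σ hanti hnonneg hσ
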